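/- Let x and x' be two states of a best-effort network with X_ℓ ≤ X'_ℓ for every link ℓ, and let ζ be a max-min fair allocation for the state x. Then for every route r with x_r > 0, ζ_r ≥ min_{ℓ∈r} C_ℓ/X'_ℓ; i.e., the max-min rate in the smaller state dominates the min-policy rate in the larger state. (This is the key monotonicity inequality underlying the coupling proof that the process under the max-min allocation is stochastically smaller than under the min allocation.) -/

import Mathlib

open Finset

theorem sum_natCast_mul_le_sum_mul {ι : Type*} (s : Finset ι) (x : ι → ℕ) (ζ : ι → ℝ) (M : ℝ)
    (h : ∀ i ∈ s, 0 < x i → ζ i ≤ M) :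
    ∑ i ∈ s, (x i : ℝ) * ζ i ≤ (∑ i ∈ s, (x i : ℝ)) * M := by
  rw [sum_mul]
  refine sum_le_sum fun i hi => ?_
  rcases (x i).eq_zero_or_pos with hx | hx
  · simp [hx]
  · exact mul_le_mul_of_nonneg_left (h i hi hx) (Nat.cast_nonneg _)

theorem statement_2_general {L R : Type*} [Fintype R] [DecidableEq L]
    (route : R → Finset L) (hroute : ∀ r, (route r).Nonempty)
    (C : L → ℝ)
    (x x' : R → ℕ)
    (hmono : ∀ ℓ, (∑ r ∈ Finset.univ.filter (fun r => ℓ ∈ route r), x r) ≤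
                  (∑ r ∈ Finset.univ.filter (fun r => ℓ ∈ route r), x' r))
    (ζ : R → ℝ) (hζnonneg : ∀ r, 0 ≤ ζ r)
    (hfair : ∀ r, ∀ hr : 0 < x r, ∃ ℓ, ∃ hℓ : ℓ ∈ route r,
      (∑ r' ∈ Finset.univ.filter (fun r' => ℓ ∈ route r'), (x r' : ℝ) * ζ r' = C ℓ) ∧
      ζ r = (Finset.univ.filter (fun r' => ℓ ∈ route r' ∧ 0 < x r')).sup'
              ⟨r, Finset.mem_filter.mpr ⟨Finset.mem_univ r, hℓ, hr⟩⟩ ζ) :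
    ∀ r, 0 < x r →
      (route r).inf' (hroute r)
          (fun ℓ => C ℓ /
            (∑ r' ∈ Finset.univ.filter (fun r' => ℓ ∈ route r'), (x' r' : ℝ))) ≤ ζ r := by
  intro r hr
  obtain ⟨ℓ, hℓ, hsat, hmax⟩ := hfair r hr
  set S := univ.filter fun r' => ℓ ∈ route r'
  have hrS : r ∈ S := mem_filter.mpr ⟨mem_univ r, hℓ⟩
  have hload : (∑ r' ∈ S, (x r' : ℝ)) ≤ ∑ r' ∈ S, (x' r' : ℝ) := by exact_mod_cast hmono ℓ
  have hload_pos : 0 < ∑ r' ∈ S, (x r' : ℝ) := by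
    exact_mod_cast sum_pos' (fun _ _ => Nat.zero_le _) ⟨r, hrS, hr⟩
  have hζ_le : ∀ r' ∈ S, 0 < x r' → ζ r' ≤ ζ r := fun r' hr' hpos =>
    hmax ▸ le_sup' ζ (mem_filter.mpr ⟨mem_univ r', (mem_filter.mp hr').2, hpos⟩)
  calc (route r).inf' (hroute r) (fun ℓ => C ℓ / ∑ r' ∈ univ.filter (ℓ ∈ route ·), (x' r' : ℝ))
      ≤ C ℓ / ∑ r' ∈ S, (x' r' : ℝ) := inf'_le _ hℓ
    _ ≤ ζ r := by
      rw [div_le_iff₀ (hload_pos.trans_le hload)]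
      calc C ℓ = ∑ r' ∈ S, (x r' : ℝ) * ζ r' := hsat.symm
        _ ≤ (∑ r' ∈ S, (x r' : ℝ)) * ζ r := sum_natCast_mul_le_sum_mul S x ζ (ζ r) hζ_le
        _ ≤ (∑ r' ∈ S, (x' r' : ℝ)) * ζ r := mul_le_mul_of_nonneg_right hload (hζnonneg r)
        _ = ζ r * ∑ r' ∈ S, (x' r' : ℝ) := mul_comm _ _

/-- Let `x` and `x'` be two states of a best-effort network with
`X_ℓ ≤ X'_ℓ` for every link `ℓ` (where `X_ℓ = ∑_{r ∋ ℓ} x_r`), and let `ζ` be a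
max-min fair allocation for the state `x`. Then for every route `r` with `x_r > 0`,
`ζ_r ≥ min_{ℓ ∈ r} C_ℓ / X'_ℓ`: the max-min rate in the smaller state dominates the
min-policy rate in the larger state. -/
theorem statement_2 {L R : Type*} [Fintype L] [Fintype R] [DecidableEq L]
    (route : R → Finset L) (hroute : ∀ r, (route r).Nonempty)
    (C : L → ℝ) (hC : ∀ ℓ, 0 < C ℓ)
    (x x' : R → ℕ)
    (hmono : ∀ ℓ, (∑ r ∈ Finset.univ.filter (fun r => ℓ ∈ route r), x r) ≤
                  (∑ r ∈ Finset.univ.filter (fun r => ℓ ∈ route r), x' r))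
    (ζ : R → ℝ) (hζnonneg : ∀ r, 0 ≤ ζ r)
    (hcap : ∀ ℓ, ∑ r ∈ Finset.univ.filter (fun r => ℓ ∈ route r), (x r : ℝ) * ζ r ≤ C ℓ)
    (hfair : ∀ r, ∀ hr : 0 < x r, ∃ ℓ, ∃ hℓ : ℓ ∈ route r,
      (∑ r' ∈ Finset.univ.filter (fun r' => ℓ ∈ route r'), (x r' : ℝ) * ζ r' = C ℓ) ∧
      ζ r = (Finset.univ.filter (fun r' => ℓ ∈ route r' ∧ 0 < x r')).sup'
              ⟨r, Finset.mem_filter.mpr ⟨Finset.mem_univ r, hℓ, hr⟩⟩ ζ) :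
    ∀ r, 0 < x r →
      (route r).inf' (hroute r)
          (fun ℓ => C ℓ /
            (∑ r' ∈ Finset.univ.filter (fun r' => ℓ ∈ route r'), (x' r' : ℝ))) ≤ ζ r :=
  statement_2_general route hroute C x x' hmono ζ hζnonneg hfair
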